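/- arXiv:0908.3590 — 4 statements merged into one kernel-verified Lean document; each statement's English description precedes it below -/
import Mathlib

section
/- For each θ ∈ (0, nπ/2) and each r > 0, the superlevel set {A ∈ Symm⁺(ℝⁿ) : R_θ(A) ≥ r} is a convex subset of the symmetric matrices. -/
open Real Matrix RealInnerProductSpace

private lemma arctan_concaveOn' : ConcaveOn ℝ (Set.Ici 0) Real.arctan := by
  refine concaveOn_of_hasDerivWithinAt2_nonpos (f' := fun x => 1/(1+x^2))
    (f'' := fun x => -(2*x)/(1+x^2)^2) (convex_Ici 0)
    Real.continuous_arctan.continuousOn (fun x _ => (Real.hasDerivAt_arctan x).hasDerivWithinAt)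
    (fun x _ => ?_) (fun x hx => ?_)
  · have h1 : (1:ℝ) + x^2 ≠ 0 := by positivity
    have h2 : HasDerivAt (fun y : ℝ => 1 + y^2) (2*x) x := by
      simpa using (hasDerivAt_pow 2 x).const_add (1:ℝ)
    have h4 : HasDerivAt (fun y : ℝ => 1/(1+y^2)) (-(2*x)/(1+x^2)^2) x := by
      have := (hasDerivAt_const x (1:ℝ)).div h2 h1
      simp only [Pi.div_def] at this
      exact this.congr_deriv (by ring)
    exact h4.hasDerivWithinAt
  · rw [interior_Ici] at hx
    have hx' : (0:ℝ) < x := hx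
    have h1 : (0:ℝ) < (1+x^2)^2 := by positivity
    show -(2*x)/(1+x^2)^2 ≤ 0
    apply div_nonpos_of_nonpos_of_nonneg <;> nlinarith

private lemma g_concaveOn {r : ℝ} (hr : 0 < r) :
    ConcaveOn ℝ (Set.Ici 0) (fun x => Real.arctan (x / r)) := by
  refine ⟨convex_Ici 0, fun x hx y hy a b ha hb hab => ?_⟩
  have hx' : x / r ∈ Set.Ici (0:ℝ) := div_nonneg hx hr.le
  have hy' : y / r ∈ Set.Ici (0:ℝ) := div_nonneg hy hr.le
  have := arctan_concaveOn'.2 hx' hy' ha hb hab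
  simpa [smul_eq_mul, add_div, mul_div_assoc] using this

private lemma toEL_eigen {n : ℕ} (A : Matrix (Fin n) (Fin n) ℝ) (hA : A.IsHermitian) (j : Fin n) :
    Matrix.toEuclideanLin A (hA.eigenvectorBasis j) = hA.eigenvalues j • hA.eigenvectorBasis j := by
  have h := hA.mulVec_eigenvectorBasis j
  apply (WithLp.equiv 2 (Fin n → ℝ)).injective
  simpa [Matrix.toEuclideanLin_apply] using h

private lemma quad_expand {n : ℕ} (A : Matrix (Fin n) (Fin n) ℝ) (hA : A.IsHermitian)
    (v : EuclideanSpace ℝ (Fin n)) :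
    ⟪v, Matrix.toEuclideanLin A v⟫ =
      ∑ j, hA.eigenvalues j * ⟪hA.eigenvectorBasis j, v⟫ ^ 2 := by
  set u := hA.eigenvectorBasis
  have hv := u.sum_repr' v
  nth_rewrite 2 [← hv]
  rw [map_sum, inner_sum]
  refine Finset.sum_congr rfl fun j _ => ?_
  rw [LinearMap.map_smul, toEL_eigen A hA j, inner_smul_right, inner_smul_right,
    ← real_inner_comm v (u j)]
  ring

private lemma quad_nonneg {n : ℕ} {A : Matrix (Fin n) (Fin n) ℝ} (hA : A.PosDef)
    (v : EuclideanSpace ℝ (Fin n)) : 0 ≤ ⟪v, Matrix.toEuclideanLin A v⟫ := by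
  rw [quad_expand A hA.1 v]
  exact Finset.sum_nonneg fun j _ => mul_nonneg (hA.eigenvalues_pos j).le (sq_nonneg _)

private lemma trace_ineq {n : ℕ} {f : ℝ → ℝ} (hf : ConcaveOn ℝ (Set.Ici 0) f)
    (A : Matrix (Fin n) (Fin n) ℝ) (hA : A.PosDef)
    (v : OrthonormalBasis (Fin n) ℝ (EuclideanSpace ℝ (Fin n))) :
    ∑ j, f (hA.1.eigenvalues j) ≤ ∑ i, f ⟪v i, Matrix.toEuclideanLin A (v i)⟫ := by
  set u := hA.1.eigenvectorBasis with hu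
  have key : ∀ i, ∑ j, ⟪u j, v i⟫^2 * f (hA.1.eigenvalues j)
      ≤ f ⟪v i, Matrix.toEuclideanLin A (v i)⟫ := by
    intro i
    have hsum : ∑ j, ⟪u j, v i⟫^2 = 1 := by
      have h := u.sum_inner_mul_inner (v i) (v i)
      have hn : ⟪v i, v i⟫ = 1 := by
        rw [real_inner_self_eq_norm_sq, v.orthonormal.1 i]; norm_num
      rw [hn] at h
      rw [← h]
      refine Finset.sum_congr rfl fun j _ => ?_
      rw [real_inner_comm (v i) (u j)]; ring
    have hj := hf.le_map_sum (t := Finset.univ) (w := fun j => ⟪u j, v i⟫^2)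
      (p := fun j => hA.1.eigenvalues j)
      (fun j _ => sq_nonneg _) hsum
      (fun j _ => (hA.eigenvalues_pos j).le)
    rw [quad_expand A hA.1 (v i)]
    calc ∑ j, ⟪u j, v i⟫^2 * f (hA.1.eigenvalues j)
        = ∑ j, ⟪u j, v i⟫^2 • f (hA.1.eigenvalues j) := by simp [smul_eq_mul]
      _ ≤ f (∑ j, ⟪u j, v i⟫^2 • hA.1.eigenvalues j) := hj
      _ = f (∑ j, hA.1.eigenvalues j * ⟪u j, v i⟫^2) := by
          congr 1; exact Finset.sum_congr rfl fun j _ => by rw [smul_eq_mul]; ring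
  calc ∑ j, f (hA.1.eigenvalues j)
      = ∑ j, (∑ i, ⟪u j, v i⟫^2) * f (hA.1.eigenvalues j) := by
        refine Finset.sum_congr rfl fun j _ => ?_
        have h := v.sum_inner_mul_inner (u j) (u j)
        have hn : ⟪u j, u j⟫ = 1 := by
          rw [real_inner_self_eq_norm_sq, u.orthonormal.1 j]; norm_num
        rw [hn] at h
        have : ∑ i, ⟪u j, v i⟫^2 = 1 := by
          rw [← h]; exact Finset.sum_congr rfl fun i _ => by rw [real_inner_comm (v i) (u j)]; ring
        rw [this, one_mul]
    _ = ∑ i, ∑ j, ⟪u j, v i⟫^2 * f (hA.1.eigenvalues j) := by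
        rw [Finset.sum_comm]
        exact Finset.sum_congr rfl fun j _ => by rw [Finset.sum_mul]
    _ ≤ ∑ i, f ⟪v i, Matrix.toEuclideanLin A (v i)⟫ := Finset.sum_le_sum fun i _ => key i

private lemma posDef_smul {n : ℕ} {A : Matrix (Fin n) (Fin n) ℝ} (hA : A.PosDef)
    {c : ℝ} (hc : 0 < c) : (c • A).PosDef := by
  have h1 : (c • A).IsHermitian := by
    rw [Matrix.IsHermitian, Matrix.conjTranspose_smul, star_trivial, hA.1.eq]
  refine ⟨h1, fun x hx => ?_⟩
  have := mul_pos hc (hA.2 hx)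
  simpa [Finsupp.sum, Finset.mul_sum, mul_assoc, mul_left_comm] using this

theorem stmt_4 {n : ℕ} (θ r : ℝ) (hθ : θ ∈ Set.Ioo (0 : ℝ) ((n : ℝ) * π / 2))
    (hr : 0 < r) :
    Convex ℝ {A : Matrix (Fin n) (Fin n) ℝ |
      ∃ hA : A.PosDef, θ ≤ ∑ i, Real.arctan (hA.1.eigenvalues i / r)} := by
  rintro A ⟨hA, hAθ⟩ B ⟨hB, hBθ⟩ a b ha hb hab
  rcases eq_or_lt_of_le ha with ha0 | ha
  · have : b = 1 := by linarith
    subst this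
    simpa [← ha0] using ⟨hB, hBθ⟩
  rcases eq_or_lt_of_le hb with hb0 | hb
  · have : a = 1 := by linarith
    subst this
    simpa [← hb0] using ⟨hA, hAθ⟩
  have hC : (a • A + b • B).PosDef := (posDef_smul hA ha).add (posDef_smul hB hb)
  refine ⟨hC, ?_⟩
  set g : ℝ → ℝ := fun x => Real.arctan (x / r) with hg
  have hgc := g_concaveOn hr
  set v := hC.1.eigenvectorBasis with hv
  -- each eigenvalue equals the quadratic form at its eigenvector
  have hqc : ∀ i, ⟪v i, Matrix.toEuclideanLin (a • A + b • B) (v i)⟫ = hC.1.eigenvalues i := by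
    intro i
    rw [toEL_eigen _ hC.1 i, inner_smul_right, real_inner_self_eq_norm_sq, v.orthonormal.1 i]
    norm_num
  have hsplit : ∀ i, ⟪v i, Matrix.toEuclideanLin (a • A + b • B) (v i)⟫
      = a * ⟪v i, Matrix.toEuclideanLin A (v i)⟫ + b * ⟪v i, Matrix.toEuclideanLin B (v i)⟫ := by
    intro i
    rw [map_add, _root_.map_smul, _root_.map_smul, LinearMap.add_apply, LinearMap.smul_apply,
      LinearMap.smul_apply, inner_add_right, inner_smul_right, inner_smul_right]
  have step1 : ∀ i, a * g ⟪v i, Matrix.toEuclideanLin A (v i)⟫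
      + b * g ⟪v i, Matrix.toEuclideanLin B (v i)⟫ ≤ g (hC.1.eigenvalues i) := by
    intro i
    rw [← hqc i, hsplit i]
    exact hgc.2 (quad_nonneg hA _) (quad_nonneg hB _) ha.le hb.le hab
  calc θ = a * θ + b * θ := by rw [← add_mul, hab, one_mul]
    _ ≤ a * (∑ j, g (hA.1.eigenvalues j)) + b * (∑ j, g (hB.1.eigenvalues j)) := by
        apply add_le_add <;> apply mul_le_mul_of_nonneg_left _ (by positivity)
        · exact hAθ
        · exact hBθ
    _ ≤ a * (∑ i, g ⟪v i, Matrix.toEuclideanLin A (v i)⟫)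
        + b * (∑ i, g ⟪v i, Matrix.toEuclideanLin B (v i)⟫) := by
        apply add_le_add <;> apply mul_le_mul_of_nonneg_left _ (by positivity)
        · exact trace_ineq hgc A hA v
        · exact trace_ineq hgc B hB v
    _ = ∑ i, (a * g ⟪v i, Matrix.toEuclideanLin A (v i)⟫
        + b * g ⟪v i, Matrix.toEuclideanLin B (v i)⟫) := by
        rw [Finset.sum_add_distrib, Finset.mul_sum, Finset.mul_sum]
    _ ≤ ∑ i, g (hC.1.eigenvalues i) := Finset.sum_le_sum fun i _ => step1 i
    _ = ∑ i, Real.arctan (hC.1.eigenvalues i / r) := rfl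
end

section
/- The function A ↦ arctan(A) = ∑ᵢ arctan(λᵢ(A)) is concave on the space of positive semidefinite symmetric matrices. -/
open scoped Classical

/- The spectral function A ↦ ∑ᵢ arctan(λᵢ(A)) on symmetric (real Hermitian) matrices. -/
noncomputable def arctanSpec {n : ℕ} (A : Matrix (Fin n) (Fin n) ℝ) : ℝ :=
  if h : A.IsHermitian then ∑ i, Real.arctan (h.eigenvalues i) else 0

open Matrix

/-- arctan is concave on [0, ∞). -/
lemma concaveOn_arctan : ConcaveOn ℝ (Set.Ici (0:ℝ)) Real.arctan := by
  apply AntitoneOn.concaveOn_of_deriv (convex_Ici 0)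
  · exact Real.continuous_arctan.continuousOn
  · exact Real.differentiable_arctan.differentiableOn
  · intro x hx y hy hxy
    rw [Real.deriv_arctan]
    rw [interior_Ici] at hx hy
    have hx0 : (0:ℝ) < x := hx
    apply one_div_le_one_div_of_le (by positivity)
    have : x ^ 2 ≤ y ^ 2 := by nlinarith
    linarith

lemma diag_nonneg {n : ℕ} {M : Matrix (Fin n) (Fin n) ℝ} (hM : M.PosSemidef) (i : Fin n) :
    0 ≤ M i i := by
  exact hM.diag_nonneg

/-- Key lemma: Jensen / doubly-stochastic step. For `A` PSD and `V` unitary,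
`∑ arctan (λᵢ(A)) ≤ ∑ arctan ((Vᴴ A V)ᵢᵢ)`. -/
lemma key {n : ℕ} {A : Matrix (Fin n) (Fin n) ℝ} (hA : A.PosSemidef)
    (V : Matrix (Fin n) (Fin n) ℝ) (hV : V ∈ Matrix.unitaryGroup (Fin n) ℝ) :
    ∑ i, Real.arctan (hA.1.eigenvalues i) ≤ ∑ i, Real.arctan ((Vᴴ * A * V) i i) := by
  set hH := hA.1
  set W : Matrix (Fin n) (Fin n) ℝ := (hH.eigenvectorUnitary : Matrix (Fin n) (Fin n) ℝ)
  set lam := hH.eigenvalues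
  set Q : Matrix (Fin n) (Fin n) ℝ := Vᴴ * W
  have hW : W ∈ Matrix.unitaryGroup (Fin n) ℝ := hH.eigenvectorUnitary.2
  have hQ : Q ∈ Matrix.unitaryGroup (Fin n) ℝ := by
    have h1 : star V ∈ Matrix.unitaryGroup (Fin n) ℝ := Unitary.star_mem hV
    rw [Matrix.star_eq_conjTranspose] at h1
    exact mul_mem h1 hW
  have hrow : ∀ i, ∑ j, Q i j ^ 2 = 1 := by
    intro i
    have h0 := (Matrix.mem_unitaryGroup_iff).mp hQ
    rw [Matrix.star_eq_conjTranspose] at h0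
    have h1 : (Q * Qᴴ) i i = (1 : Matrix (Fin n) (Fin n) ℝ) i i := by rw [h0]
    simpa [Matrix.mul_apply, Matrix.conjTranspose_apply, pow_two, Matrix.one_apply] using h1
  have hcol : ∀ j, ∑ i, Q i j ^ 2 = 1 := by
    intro j
    have h0 := (Matrix.mem_unitaryGroup_iff').mp hQ
    rw [Matrix.star_eq_conjTranspose] at h0
    have h1 : (Qᴴ * Q) j j = (1 : Matrix (Fin n) (Fin n) ℝ) j j := by rw [h0]
    simpa [Matrix.mul_apply, Matrix.conjTranspose_apply, pow_two, Matrix.one_apply] using h1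
  have hdiag : ∀ i, (Vᴴ * A * V) i i = ∑ j, Q i j ^ 2 * lam j := by
    intro i
    have hspec : A = W * Matrix.diagonal lam * Wᴴ := by
      have := hH.spectral_theorem
      simpa [RCLike.ofReal_real_eq_id, W, lam, Matrix.star_eq_conjTranspose] using this
    have : Vᴴ * A * V = Q * Matrix.diagonal lam * Qᴴ := by
      rw [hspec]
      simp only [Q, Matrix.conjTranspose_mul, Matrix.conjTranspose_conjTranspose]
      noncomm_ring
    rw [this]
    simp only [Matrix.mul_apply, Matrix.mul_diagonal, Matrix.conjTranspose_apply, pow_two,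
      star_trivial]
    refine Finset.sum_congr rfl fun j _ => ?_
    have hsum : (∑ k, Q i k * Matrix.diagonal lam k j) = Q i j * lam j := by
      rw [Finset.sum_eq_single j]
      · simp
      · intro b _ hb; rw [Matrix.diagonal_apply_ne lam hb, mul_zero]
      · simp
    rw [hsum]; ring
  calc ∑ i, Real.arctan (lam i)
      = ∑ j, (∑ i, Q i j ^ 2) * Real.arctan (lam j) := by
        simp [hcol]
    _ = ∑ i, ∑ j, Q i j ^ 2 * Real.arctan (lam j) := by
        rw [Finset.sum_comm]
        simp [Finset.sum_mul]
    _ ≤ ∑ i, Real.arctan ((Vᴴ * A * V) i i) := by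
        apply Finset.sum_le_sum
        intro i _
        rw [hdiag i]
        have := concaveOn_arctan.le_map_sum (t := Finset.univ)
          (w := fun j => Q i j ^ 2) (p := lam)
          (fun j _ => sq_nonneg _) (hrow i)
          (fun j _ => hA.eigenvalues_nonneg j)
        simpa [smul_eq_mul] using this

lemma posSemidef_smul {n : ℕ} {A : Matrix (Fin n) (Fin n) ℝ} (hA : A.PosSemidef)
    {c : ℝ} (hc : 0 ≤ c) : (c • A).PosSemidef := by
  constructor
  · simp only [Matrix.IsHermitian, Matrix.conjTranspose_smul]
    rw [hA.1.eq]
    congr 1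
  · intro x
    exact (hA.smul hc).2 x

/- STATEMENT 6: A ↦ ∑ᵢ arctan(λᵢ(A)) is concave on the set of positive semidefinite
symmetric matrices. -/
theorem stmt_6 {n : ℕ} :
    ConcaveOn ℝ {A : Matrix (Fin n) (Fin n) ℝ | A.PosSemidef} arctanSpec := by
  constructor
  · intro A hA B hB a b ha hb hab
    exact (posSemidef_smul hA ha).add (posSemidef_smul hB hb)
  · intro A hA B hB a b ha hb hab
    simp only [Set.mem_setOf_eq] at hA hB
    have hC : (a • A + b • B).PosSemidef := (posSemidef_smul hA ha).add (posSemidef_smul hB hb)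
    set C := a • A + b • B with hCdef
    set V : Matrix (Fin n) (Fin n) ℝ := (hC.1.eigenvectorUnitary : Matrix (Fin n) (Fin n) ℝ)
    have hV : V ∈ Matrix.unitaryGroup (Fin n) ℝ := hC.1.eigenvectorUnitary.2
    -- μ i = (Vᴴ C V) i i
    have hmu : ∀ i, hC.1.eigenvalues i = (Vᴴ * C * V) i i := by
      intro i
      have := hC.1.conjStarAlgAut_star_eigenvectorUnitary
      have h2 : Vᴴ * C * V = Matrix.diagonal hC.1.eigenvalues := by
        simpa [RCLike.ofReal_real_eq_id, V, Unitary.conjStarAlgAut_star_apply, Matrix.star_eq_conjTranspose] using this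
      rw [h2, Matrix.diagonal_apply_eq]
    have hAconj : (Vᴴ * A * V).PosSemidef := hA.conjTranspose_mul_mul_same V
    have hBconj : (Vᴴ * B * V).PosSemidef := hB.conjTranspose_mul_mul_same V
    -- unfold arctanSpec
    rw [arctanSpec, arctanSpec, arctanSpec, dif_pos hA.1, dif_pos hB.1, dif_pos hC.1]
    have step1 : ∀ i, a * Real.arctan ((Vᴴ * A * V) i i) + b * Real.arctan ((Vᴴ * B * V) i i)
        ≤ Real.arctan (hC.1.eigenvalues i) := by
      intro i
      have hsplit : (Vᴴ * C * V) i i = a * (Vᴴ * A * V) i i + b * (Vᴴ * B * V) i i := by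
        simp [hCdef, Matrix.mul_add, Matrix.add_mul, Matrix.mul_smul, Matrix.smul_mul,
          Matrix.add_apply, Matrix.smul_apply, smul_eq_mul]
      rw [hmu i, hsplit]
      have := concaveOn_arctan.2 (diag_nonneg hAconj i) (diag_nonneg hBconj i) ha hb hab
      simpa [smul_eq_mul] using this
    calc a • ∑ i, Real.arctan (hA.1.eigenvalues i) + b • ∑ i, Real.arctan (hB.1.eigenvalues i)
        ≤ a • ∑ i, Real.arctan ((Vᴴ * A * V) i i) + b • ∑ i, Real.arctan ((Vᴴ * B * V) i i) := by
          refine add_le_add ?_ ?_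
          · exact smul_le_smul_of_nonneg_left (key hA V hV) ha
          · exact smul_le_smul_of_nonneg_left (key hB V hV) hb
      _ = ∑ i, (a * Real.arctan ((Vᴴ * A * V) i i) + b * Real.arctan ((Vᴴ * B * V) i i)) := by
          simp [Finset.mul_sum, Finset.sum_add_distrib]
      _ ≤ ∑ i, Real.arctan (hC.1.eigenvalues i) := Finset.sum_le_sum fun i _ => step1 i
end

section
/- For n = 3 and θ = π, the special Lagrangian curvature of a 3×3 positive definite symmetric matrix A equals (det A / tr A)^{1/2}, i.e., R_π(A)² · (λ₁ + λ₂ + λ₃) = λ₁λ₂λ₃. -/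
open Real

lemma arctan_sum_key {a b c : ℝ} (ha : 0 < a) (hb : 0 < b) (hc : 0 < c)
    (h : Real.arctan a + Real.arctan b + Real.arctan c = π) : a + b + c = a * b * c := by
  rcases lt_trichotomy (a * b) 1 with h1 | h1 | h1
  · have h2 := Real.arctan_add_arctan_lt_pi_div_two h1
    have h3 := Real.arctan_lt_pi_div_two c
    linarith
  · have hb' : b = a⁻¹ := by field_simp; linarith
    have h2 : Real.arctan a + Real.arctan b = π / 2 := by
      rw [hb', Real.arctan_inv_of_pos ha]; ring
    have h3 := Real.arctan_lt_pi_div_two c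
    linarith
  · have h2 := Real.arctan_add_eq_add_pi h1 ha
    rw [h2] at h
    have h3 : Real.arctan c = Real.arctan (-((a + b) / (1 - a * b))) := by
      rw [Real.arctan_neg]; linarith
    have h4 : c = -((a + b) / (1 - a * b)) := Real.arctan_injective h3
    have hne : 1 - a * b ≠ 0 := by linarith
    field_simp at h4
    linarith

lemma trace_eq_sum_eigenvalues {A : Matrix (Fin 3) (Fin 3) ℝ} (hA : A.IsHermitian) :
    A.trace = ∑ i, hA.eigenvalues i := by
  conv_lhs => rw [hA.spectral_theorem]
  rw [Unitary.conjStarAlgAut_apply, Matrix.trace_mul_cycle]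
  rw [Matrix.mem_unitaryGroup_iff'.mp (hA.eigenvectorUnitary).2, one_mul, Matrix.trace_diagonal]
  simp

/- STATEMENT 10: For a 3×3 positive definite symmetric matrix A, the special Lagrangian
curvature R_π(A), i.e. the r > 0 with ∑ᵢ arctan(λᵢ/r) = π, satisfies
R_π(A)²·(λ₁+λ₂+λ₃) = λ₁λ₂λ₃, i.e. r²·tr A = det A. -/
theorem stmt_10 (A : Matrix (Fin 3) (Fin 3) ℝ) (hA : A.PosDef) (r : ℝ) (hr : 0 < r)
    (heq : ∑ i, Real.arctan (hA.1.eigenvalues i / r) = π) :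
    r ^ 2 * A.trace = A.det := by
  set f := hA.1.eigenvalues with hf
  have h0 := hA.eigenvalues_pos 0
  have h1 := hA.eigenvalues_pos 1
  have h2 := hA.eigenvalues_pos 2
  rw [Fin.sum_univ_three] at heq
  have key := arctan_sum_key (a := f 0 / r) (b := f 1 / r) (c := f 2 / r)
    (by positivity) (by positivity) (by positivity) (by linarith [heq])
  have htr : A.trace = f 0 + f 1 + f 2 := by
    rw [trace_eq_sum_eigenvalues hA.1, Fin.sum_univ_three]
  have hdet : A.det = f 0 * f 1 * f 2 := by
    rw [hA.1.det_eq_prod_eigenvalues, Fin.prod_univ_three]; norm_num [hf]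
  rw [htr, hdet]
  have hr' : r ≠ 0 := ne_of_gt hr
  field_simp at key
  nlinarith [key, sq_nonneg r]
end

section
/- Let A be a symmetric n×n matrix of block form A = [[D, b], [bᵀ, M]] where D = diag(λ₁,…,λ_{n−1}) with λᵢ > 0 fixed, b a fixed bounded vector, and M → ∞. Then the eigenvalues λ'₁,…,λ'ₙ of A satisfy λ'ᵢ = λᵢ + o(1) for 1 ≤ i ≤ n−1 and λ'ₙ = M(1 + o(1)) as M → ∞. -/
open Sum Finset Matrix

set_option maxHeartbeats 1600000 in
theorem stmt19_aux (n : ℕ) (d : Fin n → ℝ) (b : Fin n → ℝ) (M ε ε' : ℝ)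
    (hε : 0 < ε) (hε'p : 0 < ε') (hε'ε : ε' ≤ ε) (hε'1 : ε' ≤ 1)
    (hgap : ∀ i j, d i ≠ d j → 2 * ε' ≤ |d i - d j|)
    (hd : ∀ i, 0 < d i)
    {A : Matrix (Fin n ⊕ Fin 1) (Fin n ⊕ Fin 1) ℝ} (hA : A.IsHermitian)
    (hmv1 : ∀ f : Fin n ⊕ Fin 1 → ℝ, ∀ i, (A *ᵥ f) (inl i) = d i * f (inl i) + b i * f (inr 0))
    (hmv2 : ∀ f : Fin n ⊕ Fin 1 → ℝ, (A *ᵥ f) (inr 0) = (∑ i, b i * f (inl i)) + M * f (inr 0))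
    (hMa : (∑ i, d i) + 2 + (∑ i, (b i)^2) ≤ M)
    (hMb : (∑ i, d i) + 2 + (∑ i, (b i)^2) / ε' ≤ M)
    (hMd : (∑ i, (b i)^2) < M * ε) :
    ∃ σ : Equiv.Perm (Fin n ⊕ Fin 1),
      (∀ i : Fin n, |hA.eigenvalues (σ (inl i)) - d i| < ε) ∧
      |hA.eigenvalues (σ (inr 0)) / M - 1| < ε := by
  classical
  set P : ℝ := ∑ i, (b i)^2 with hP
  set Dm : ℝ := ∑ i, d i with hDm
  set μ : (Fin n ⊕ Fin 1) → ℝ := hA.eigenvalues with hμ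
  set B : OrthonormalBasis (Fin n ⊕ Fin 1) ℝ (EuclideanSpace ℝ (Fin n ⊕ Fin 1)) := hA.eigenvectorBasis with hB
  have hPnn : 0 ≤ P := Finset.sum_nonneg fun i _ => sq_nonneg _
  have hDmnn : 0 ≤ Dm := Finset.sum_nonneg fun i _ => (hd i).le
  have hdDm : ∀ i, d i ≤ Dm := by
    intro i
    exact Finset.single_le_sum (fun j _ => (hd j).le) (mem_univ i)
  have hM0 : 0 < M := by nlinarith
  -- inner products as sums
  have hinner : ∀ x y : EuclideanSpace ℝ (Fin n ⊕ Fin 1), (inner ℝ x y : ℝ) = ∑ j, x j * y j := by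
    intro x y; simp [PiLp.inner_apply, RCLike.inner_apply, mul_comm]
  -- Parseval
  have parseval : ∀ x : EuclideanSpace ℝ (Fin n ⊕ Fin 1), ∑ k, (inner ℝ (B k) x : ℝ)^2 = ∑ j, (x j)^2 := by
    intro x
    have h1 := B.sum_inner_mul_inner x x
    have h2 : ∀ k : (Fin n ⊕ Fin 1), (inner ℝ x (B k) : ℝ) * inner ℝ (B k) x = (inner ℝ (B k) x : ℝ)^2 := by
      intro k; rw [real_inner_comm x (B k)]; ring
    rw [Finset.sum_congr rfl (fun k _ => h2 k)] at h1
    rw [h1, hinner]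
    exact Finset.sum_congr rfl fun j _ => by ring
  -- coordinates of A *ᵥ v
  have coord : ∀ (v : EuclideanSpace ℝ (Fin n ⊕ Fin 1)) (k : (Fin n ⊕ Fin 1)),
      (inner ℝ (B k) (WithLp.toLp 2 (A *ᵥ v) : EuclideanSpace ℝ (Fin n ⊕ Fin 1)) : ℝ) = μ k * inner ℝ (B k) v := by
    intro v k
    have hsymm : ∀ x y : (Fin n ⊕ Fin 1), A x y = A y x := by
      intro x y
      conv_lhs => rw [← hA]
      simp [Matrix.conjTranspose_apply]
    have hBk := congrFun (hA.mulVec_eigenvectorBasis k)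
    rw [hinner, hinner]
    have hmv : ∀ x : (Fin n ⊕ Fin 1), (A *ᵥ v) x = ∑ y, A x y * v y := by
      intro x; rfl
    calc ∑ x, B k x * (A *ᵥ v) x = ∑ x, ∑ y, B k x * (A x y * v y) := by
          refine Finset.sum_congr rfl fun x _ => ?_
          rw [hmv, Finset.mul_sum]
      _ = ∑ y, (∑ x, A y x * B k x) * v y := by
          rw [Finset.sum_comm]
          refine Finset.sum_congr rfl fun y _ => ?_
          rw [Finset.sum_mul]
          refine Finset.sum_congr rfl fun x _ => ?_
          rw [hsymm y x]; ring
      _ = ∑ y, (μ k * B k y) * v y := by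
          refine Finset.sum_congr rfl fun y _ => ?_
          have : (A *ᵥ ⇑(B k)) y = μ k * B k y := by
            rw [hBk y]; simp; rfl
          rw [← this]; rfl
      _ = μ k * ∑ y, B k y * v y := by
          rw [Finset.mul_sum]
          exact Finset.sum_congr rfl fun y _ => by ring
  -- master identity
  have master : ∀ (v : EuclideanSpace ℝ (Fin n ⊕ Fin 1)) (c : ℝ),
      ∑ k, (μ k - c)^2 * (inner ℝ (B k) v : ℝ)^2 = ∑ x, ((A *ᵥ v) x - c * v x)^2 := by
    intro v c
    set y : EuclideanSpace ℝ (Fin n ⊕ Fin 1) := WithLp.toLp 2 (fun x => (A *ᵥ v) x - c * v x) with hy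
    have h1 : ∀ k : (Fin n ⊕ Fin 1), (inner ℝ (B k) y : ℝ) = (μ k - c) * inner ℝ (B k) v := by
      intro k
      have e1 : (inner ℝ (B k) y : ℝ) = ∑ j, B k j * y j := hinner _ _
      have e2 : ∑ j, B k j * y j
          = (∑ j, B k j * (A *ᵥ v) j) - c * ∑ j, B k j * v j := by
        rw [Finset.mul_sum, ← Finset.sum_sub_distrib]
        refine Finset.sum_congr rfl fun j _ => ?_
        show B k j * ((A *ᵥ v) j - c * v j) = _
        ring
      rw [e1, e2, ← hinner, show ∑ j, B k j * (A *ᵥ v) j = μ k * inner ℝ (B k) v from (hinner (B k) (WithLp.toLp 2 (A *ᵥ v))).symm.trans (coord v k)]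
      ring
    calc ∑ k, (μ k - c)^2 * (inner ℝ (B k) v : ℝ)^2
        = ∑ k, (inner ℝ (B k) y : ℝ)^2 := by
          refine Finset.sum_congr rfl fun k _ => ?_
          rw [h1 k]; ring
      _ = ∑ x, (y x)^2 := parseval y
      _ = ∑ x, ((A *ᵥ v) x - c * v x)^2 := rfl
  -- eigen-equations componentwise
  have eigeq1 : ∀ (k : (Fin n ⊕ Fin 1)) (i : Fin n),
      (d i - μ k) * (B k (inl i)) = -(b i * B k (inr 0)) := by
    intro k i
    have h1 := congrFun (hA.mulVec_eigenvectorBasis k) (inl i)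
    rw [hmv1] at h1
    simp only [Pi.smul_apply, smul_eq_mul] at h1
    have : d i * B k (inl i) + b i * B k (inr 0) = μ k * B k (inl i) := h1
    ring_nf
    ring_nf at this
    linarith
  have eigeq2 : ∀ k : (Fin n ⊕ Fin 1), (M - μ k) * B k (inr 0) = -∑ i, b i * B k (inl i) := by
    intro k
    have h1 := congrFun (hA.mulVec_eigenvectorBasis k) (inr 0)
    rw [hmv2] at h1
    simp only [Pi.smul_apply, smul_eq_mul] at h1
    have : (∑ i, b i * B k (inl i)) + M * B k (inr 0) = μ k * B k (inr 0) := h1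
    linarith
  have Bnorm : ∀ k : (Fin n ⊕ Fin 1), ∑ x, (B k x)^2 = 1 := by
    intro k
    have h1 : (inner ℝ (B k) (B k) : ℝ) = 1 := by
      have := B.orthonormal.1 k
      rw [@real_inner_self_eq_norm_sq, this]; norm_num
    rw [hinner] at h1
    rw [← h1]
    exact Finset.sum_congr rfl fun x _ => (sq (B k x)).symm ▸ (pow_two (B k x))
  -- weighted existence principle
  have wexists : ∀ (g w : (Fin n ⊕ Fin 1) → ℝ) (C : ℝ), (∀ k, 0 ≤ w k) → (∑ k, g k * w k ≤ C * ∑ k, w k) →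
      (0 < ∑ k, w k) → ∃ k, w k ≠ 0 ∧ g k ≤ C := by
    intro g w C hw hsum hpos
    by_contra hcon
    push_neg at hcon
    have hne : ∃ k₀ : (Fin n ⊕ Fin 1), w k₀ ≠ 0 := by
      by_contra hz; push_neg at hz
      rw [Finset.sum_congr rfl (fun k _ => hz k)] at hpos
      simp at hpos
    obtain ⟨k₀, hk₀⟩ := hne
    have hlt : C * ∑ k, w k < ∑ k, g k * w k := by
      rw [Finset.mul_sum]
      apply Finset.sum_lt_sum (f := fun k => C * w k) (g := fun k => g k * w k)
      · intro k _
        rcases eq_or_ne (w k) 0 with h0 | h0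
        · rw [h0]; ring_nf; exact le_rfl
        · have := hcon k h0
          have hwk : 0 < w k := lt_of_le_of_ne (hw k) (Ne.symm h0)
          nlinarith
      · refine ⟨k₀, mem_univ k₀, ?_⟩
        have := hcon k₀ hk₀
        have hwk : 0 < w k₀ := lt_of_le_of_ne (hw k₀) (Ne.symm hk₀)
        nlinarith
    linarith
  -- F2 : existence of a big eigenvalue
  have hbig : ∃ k : (Fin n ⊕ Fin 1), Dm + 1 < μ k := by
    set e : EuclideanSpace ℝ (Fin n ⊕ Fin 1) :=
      WithLp.toLp 2 (fun x => Sum.elim (fun _ => (0:ℝ)) (fun _ => (1:ℝ)) x) with he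
    have hres : ∀ x, (A *ᵥ e) x - M * e x = Sum.elim b (fun _ => (0:ℝ)) x := by
      intro x
      cases x with
      | inl i => rw [hmv1]; simp [he]
      | inr j =>
        have hj : j = 0 := Subsingleton.elim _ _
        subst hj; rw [hmv2]; simp [he]
    have hm := master e M
    have hRHS : ∑ x, ((A *ᵥ e) x - M * e x)^2 = P := by
      rw [Finset.sum_congr rfl (fun x _ => by rw [hres x])]
      rw [Fintype.sum_sum_type]
      simp [hP]
    have hpar : ∑ k, (inner ℝ (B k) e : ℝ)^2 = 1 := by
      rw [parseval e, Fintype.sum_sum_type]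
      simp [he]
    obtain ⟨k, -, hk2⟩ := wexists (fun k => (μ k - M)^2) (fun k => (inner ℝ (B k) e : ℝ)^2) P
      (fun k => sq_nonneg _) (by rw [hpar, hm, hRHS, mul_one]) (by rw [hpar]; norm_num)
    refine ⟨k, ?_⟩
    by_contra hle
    push_neg at hle
    nlinarith
  -- big eigenvalues are near M
  have hbigbound : ∀ k : (Fin n ⊕ Fin 1), Dm + 1 < μ k → |μ k - M| ≤ P := by
    intro k hk
    set t : ℝ := B k (inr 0) with ht
    have hui : ∀ i, |B k (inl i)| ≤ |b i| * |t| := by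
      intro i
      have h1 := eigeq1 k i
      have h2 : |d i - μ k| * |B k (inl i)| = |b i| * |t| := by
        rw [← abs_mul, h1, abs_neg, abs_mul]
      have h3 : 1 ≤ |d i - μ k| := by
        rw [abs_sub_comm, abs_of_pos (by have := hdDm i; linarith)]
        have := hdDm i; linarith
      nlinarith [abs_nonneg (B k (inl i))]
    have htne : t ≠ 0 := by
      intro h0
      have hz : ∀ i, B k (inl i) = 0 := by
        intro i
        have := hui i
        rw [h0, abs_zero, mul_zero] at this
        exact abs_eq_zero.1 (le_antisymm this (abs_nonneg _))
      have := Bnorm k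
      rw [Fintype.sum_sum_type] at this
      simp only [Fin.sum_univ_one] at this
      rw [Finset.sum_congr rfl (fun i _ => by rw [hz i])] at this
      simp [← ht, h0] at this
    have h4 := eigeq2 k
    have h5 : |M - μ k| * |t| ≤ P * |t| := by
      have e1 : |M - μ k| * |t| = |∑ i, b i * B k (inl i)| := by
        rw [← abs_mul, h4, abs_neg]
      rw [e1]
      calc |∑ i, b i * B k (inl i)| ≤ ∑ i, |b i * B k (inl i)| := Finset.abs_sum_le_sum_abs _ _
        _ ≤ ∑ i, (b i)^2 * |t| := by
            refine Finset.sum_le_sum fun i _ => ?_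
            rw [abs_mul]
            calc |b i| * |B k (inl i)| ≤ |b i| * (|b i| * |t|) :=
                mul_le_mul_of_nonneg_left (hui i) (abs_nonneg _)
              _ = (b i)^2 * |t| := by
                rw [← mul_assoc, ← abs_mul, abs_mul_self, sq]
        _ = P * |t| := by rw [← Finset.sum_mul, hP]
    have h6 : 0 < |t| := abs_pos.2 htne
    have h7 : |M - μ k| ≤ P := le_of_mul_le_mul_right (by linarith) h6
    rw [abs_sub_comm]; exact h7
  -- F1 : counting
  have F1 : ∀ i₀ : Fin n, (univ.filter (fun j => d j = d i₀)).card
      ≤ (univ.filter (fun k : (Fin n ⊕ Fin 1) => |μ k - d i₀| < ε')).card := by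
    intro i₀
    set c : ℝ := d i₀ with hc
    set J : Finset (Fin n) := univ.filter (fun j => d j = c) with hJdef
    set T : Finset (Fin n ⊕ Fin 1) := univ.filter (fun k => |μ k - c| < ε') with hTdef
    by_contra hcon
    push_neg at hcon
    have hdc : ∀ j : {j // j ∈ J}, d (j:Fin n) = c := by
      intro j
      exact (Finset.mem_filter.1 j.2).2
    have hdM : ∀ j : Fin n, d j - M ≠ 0 := by
      intro j
      have := hdDm j
      intro hzero; nlinarith
    set s : Fin n → ℝ := fun j => b j / (d j - M) with hs
    set vec : Fin n → EuclideanSpace ℝ (Fin n ⊕ Fin 1) :=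
      fun j => WithLp.toLp 2 (fun x => Sum.elim (fun i => if i = j then (1:ℝ) else 0) (fun _ => s j) x) with hvec
    set X : Matrix {k // k ∈ T} {j // j ∈ J} ℝ :=
      fun k j => (inner ℝ (B (k:Fin n ⊕ Fin 1)) (vec (j:Fin n)) : ℝ) with hX
    have hnotinj : ¬ Function.Injective X.mulVecLin := by
      intro hinj
      have h1 := LinearMap.finrank_le_finrank_of_injective hinj
      rw [Module.finrank_fintype_fun_eq_card, Module.finrank_fintype_fun_eq_card,
        Fintype.card_coe, Fintype.card_coe] at h1
      omega
    rw [Function.not_injective_iff] at hnotinj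
    obtain ⟨a₁, a₂, haeq, hane⟩ := hnotinj
    set a : {j // j ∈ J} → ℝ := a₁ - a₂ with ha
    have ha0 : a ≠ 0 := sub_ne_zero.2 hane
    have hker : X.mulVecLin a = 0 := by rw [ha, map_sub, haeq, sub_self]
    set v : EuclideanSpace ℝ (Fin n ⊕ Fin 1) :=
      WithLp.toLp 2 (fun x => ∑ j : {j // j ∈ J}, a j * vec (j:Fin n) x) with hv
    set tt : ℝ := ∑ j : {j // j ∈ J}, a j * s (j:Fin n) with htt
    -- components of v
    have hvx : ∀ x, v x = ∑ j : {j // j ∈ J}, a j * vec (j:Fin n) x := fun x => rfl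
    have hv_inr : v (inr 0) = tt := by
      rw [hvx]
      rfl
    have hv_inl : ∀ j : {j // j ∈ J}, v (inl (j:Fin n)) = a j := by
      intro j
      rw [hvx]
      have : ∀ j' : {j // j ∈ J}, j' ≠ j → a j' * vec (j':Fin n) (inl (j:Fin n)) = 0 := by
        intro j' hj'
        have hne2 : (j:Fin n) ≠ (j':Fin n) := fun hcc => hj' (Subtype.ext hcc).symm
        simp [hvec, hne2]
      rw [Finset.sum_eq_single j (fun j' _ hj' => this j' hj') (fun hj => absurd (mem_univ j) hj)]
      simp [hvec]
    have hv_zero : ∀ i : Fin n, (d i - c) * v (inl i) = 0 := by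
      intro i
      by_cases hiJ : i ∈ J
      · have : d i = c := (Finset.mem_filter.1 hiJ).2
        rw [this, sub_self, zero_mul]
      · have : v (inl i) = 0 := by
          rw [hvx]
          apply Finset.sum_eq_zero
          intro j _
          have hne2 : i ≠ (j:Fin n) := by
            intro hcc
            exact hiJ (hcc ▸ j.2)
          simp [hvec, hne2]
        rw [this, mul_zero]
    -- residual
    have hres : ∀ x, (A *ᵥ v) x - c * v x = tt * Sum.elim b (fun _ => (0:ℝ)) x := by
      intro x
      cases x with
      | inl i =>
        rw [hmv1]
        have := hv_zero i
        have h2 : v (inr 0) = tt := hv_inr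
        simp only [Sum.elim_inl]
        rw [h2]
        ring_nf
        ring_nf at this
        linarith
      | inr jj =>
        have hj : jj = 0 := Subsingleton.elim _ _
        subst hj
        rw [hmv2]
        have h1 : ∑ i, b i * v (inl i) = ∑ j : {j // j ∈ J}, a j * b (j:Fin n) := by
          have : ∀ i : Fin n, b i * v (inl i)
              = ∑ j : {j // j ∈ J}, a j * (b i * (if i = (j:Fin n) then (1:ℝ) else 0)) := by
            intro i
            rw [hvx, Finset.mul_sum]
            refine Finset.sum_congr rfl fun j _ => ?_
            simp [hvec]; ring
          rw [Finset.sum_congr rfl fun i _ => this i, Finset.sum_comm]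
          refine Finset.sum_congr rfl fun j _ => ?_
          rw [Finset.sum_eq_single (j:Fin n) (fun i _ hi => by simp [hi]) (fun hj => absurd (mem_univ _) hj)]
          simp
        have h2 : (M - c) * tt = -∑ j : {j // j ∈ J}, a j * b (j:Fin n) := by
          rw [htt, Finset.mul_sum, ← Finset.sum_neg_distrib]
          refine Finset.sum_congr rfl fun j _ => ?_
          have hbj : (M - c) * s (j:Fin n) = -b (j:Fin n) := by
            rw [hs]
            have hcj : c = d (j:Fin n) := (hdc j).symm
            rw [hcj]
            field_simp [hdM (j:Fin n)]
            ring
          calc (M - c) * (a j * s (j:Fin n)) = a j * ((M - c) * s (j:Fin n)) := by ring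
            _ = a j * (-b (j:Fin n)) := by rw [hbj]
            _ = -(a j * b (j:Fin n)) := by ring
        simp only [Sum.elim_inr, mul_zero]
        rw [h1, hv_inr]
        linarith
    -- master applied
    have hm := master v c
    have hRHS : ∑ x, ((A *ᵥ v) x - c * v x)^2 = tt^2 * P := by
      rw [Finset.sum_congr rfl fun x _ => by rw [hres x]]
      rw [Fintype.sum_sum_type]
      simp only [Sum.elim_inl, Sum.elim_inr, mul_zero]
      rw [hP, Finset.mul_sum]
      simp [mul_pow]
    -- inner products vanish on T
    have hw0 : ∀ k, k ∈ T → (inner ℝ (B k) v : ℝ) = 0 := by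
      intro k hk
      have hcoords : (inner ℝ (B k) v : ℝ) = ∑ j : {j // j ∈ J}, X ⟨k, hk⟩ j * a j := by
        rw [hinner]
        have : ∀ x, B k x * v x = ∑ j : {j // j ∈ J}, a j * (B k x * vec (j:Fin n) x) := by
          intro x
          rw [hvx, Finset.mul_sum]
          exact Finset.sum_congr rfl fun j _ => by ring
        rw [Finset.sum_congr rfl fun x _ => this x, Finset.sum_comm]
        refine Finset.sum_congr rfl fun j _ => ?_
        have hXj : X ⟨k, hk⟩ j = ∑ x, B k x * vec (j:Fin n) x := hinner _ _
        rw [hXj, Finset.sum_mul]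
        exact Finset.sum_congr rfl fun x _ => by ring
      rw [hcoords]
      have := congrFun hker ⟨k, hk⟩
      exact this
    -- lower bound on LHS
    have hstep : ∀ k, ε'^2 * (inner ℝ (B k) v : ℝ)^2 ≤ (μ k - c)^2 * (inner ℝ (B k) v : ℝ)^2 := by
      intro k
      by_cases hk : k ∈ T
      · rw [hw0 k hk]; ring_nf; exact le_rfl
      · have : ε' ≤ |μ k - c| := by
          by_contra hlt
          push_neg at hlt
          exact hk (Finset.mem_filter.2 ⟨mem_univ k, hlt⟩)
        have h2 : ε'^2 ≤ (μ k - c)^2 := by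
          nlinarith [abs_nonneg (μ k - c), sq_abs (μ k - c)]
        exact mul_le_mul_of_nonneg_right h2 (sq_nonneg _)
    set S : ℝ := ∑ j : {j // j ∈ J}, (a j)^2 with hS
    have hSpos : 0 < S := by
      obtain ⟨j, hj⟩ := Function.ne_iff.1 ha0
      have h1 : (a j)^2 ≤ S := Finset.single_le_sum (fun j' _ => sq_nonneg (a j')) (mem_univ j)
      have h2 : 0 < (a j)^2 := lt_of_le_of_ne (sq_nonneg _) (Ne.symm (pow_ne_zero 2 hj))
      linarith
    have hSv : S ≤ ∑ x, (v x)^2 := by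
      have e1 : S = ∑ i ∈ J, (v (inl i))^2 := by
        rw [hS, ← Finset.sum_coe_sort J (fun i => (v (inl i))^2)]
        exact Finset.sum_congr rfl fun j _ => by rw [hv_inl j]
      have e2 : ∑ i ∈ J, (v (inl i))^2 ≤ ∑ i : Fin n, (v (inl i))^2 :=
        Finset.sum_le_sum_of_subset_of_nonneg (Finset.subset_univ J)
          (fun i _ _ => sq_nonneg _)
      have e3 : ∑ x, (v x)^2 = (∑ i : Fin n, (v (inl i))^2) + ∑ jj : Fin 1, (v (inr jj))^2 :=
        Fintype.sum_sum_type _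
      have e4 : (0:ℝ) ≤ ∑ jj : Fin 1, (v (inr jj))^2 :=
        Finset.sum_nonneg fun _ _ => sq_nonneg _
      linarith
    have hCS : tt^2 ≤ S * ∑ j : {j // j ∈ J}, (s (j:Fin n))^2 := by
      rw [htt, hS]
      exact Finset.sum_mul_sq_le_sq_mul_sq univ _ _
    have hG : (0:ℝ) < M - Dm := by linarith
    have hssum : ∑ j : {j // j ∈ J}, (s (j:Fin n))^2 ≤ P / (M - Dm)^2 := by
      have e1 : ∀ j : {j // j ∈ J}, (s (j:Fin n))^2 ≤ (b (j:Fin n))^2 / (M - Dm)^2 := by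
        intro j
        rw [hs]
        simp only
        rw [div_pow]
        apply div_le_div_of_nonneg_left (sq_nonneg _) (by positivity)
        have h1 : M - Dm ≤ M - d (j:Fin n) := by have := hdDm (j:Fin n); linarith
        nlinarith
      calc ∑ j : {j // j ∈ J}, (s (j:Fin n))^2 ≤ ∑ j : {j // j ∈ J}, (b (j:Fin n))^2 / (M - Dm)^2 :=
            Finset.sum_le_sum fun j _ => e1 j
        _ = (∑ j ∈ J, (b j)^2) / (M - Dm)^2 := by
            rw [← Finset.sum_div, ← Finset.sum_coe_sort J (fun j => (b j)^2)]
        _ ≤ P / (M - Dm)^2 := by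
            apply div_le_div_of_nonneg_right ?_ (by positivity)
            rw [hP]
            exact Finset.sum_le_sum_of_subset_of_nonneg (Finset.subset_univ J)
              (fun i _ _ => sq_nonneg _)
    -- combine
    have hmain : ε'^2 * S ≤ S * (P / (M - Dm)^2) * P := by
      have c1 : ε'^2 * S ≤ ε'^2 * ∑ x, (v x)^2 := by
        apply mul_le_mul_of_nonneg_left hSv (by positivity)
      have c2 : ε'^2 * ∑ x, (v x)^2 = ε'^2 * ∑ k, (inner ℝ (B k) v : ℝ)^2 := by
        rw [parseval v]
      have c3 : ε'^2 * ∑ k, (inner ℝ (B k) v : ℝ)^2 ≤ ∑ k, (μ k - c)^2 * (inner ℝ (B k) v : ℝ)^2 := by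
        rw [Finset.mul_sum]
        exact Finset.sum_le_sum fun k _ => hstep k
      have c4 : tt^2 * P ≤ S * (P / (M - Dm)^2) * P := by
        have : tt^2 ≤ S * (P / (M - Dm)^2) := by
          calc tt^2 ≤ S * ∑ j : {j // j ∈ J}, (s (j:Fin n))^2 := hCS
            _ ≤ S * (P / (M - Dm)^2) := mul_le_mul_of_nonneg_left hssum hSpos.le
        exact mul_le_mul_of_nonneg_right this hPnn
      calc ε'^2 * S ≤ ε'^2 * ∑ x, (v x)^2 := c1
        _ = ε'^2 * ∑ k, (inner ℝ (B k) v : ℝ)^2 := c2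
        _ ≤ ∑ k, (μ k - c)^2 * (inner ℝ (B k) v : ℝ)^2 := c3
        _ = ∑ x, ((A *ᵥ v) x - c * v x)^2 := hm
        _ = tt^2 * P := hRHS
        _ ≤ S * (P / (M - Dm)^2) * P := c4
    have hPe : P < ε' * (M - Dm) := by
      have h1 : ε' * (M - Dm) ≥ ε' * (2 + P / ε') := by
        apply mul_le_mul_of_nonneg_left ?_ hε'p.le
        linarith
      have h2 : ε' * (2 + P / ε') = 2 * ε' + P := by
        field_simp
      linarith
    have hfalse : ε'^2 * S > S * (P / (M - Dm)^2) * P := by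
      have hq : P^2 < ε'^2 * (M - Dm)^2 := by nlinarith
      have e1 : S * (P / (M - Dm)^2) * P = S * (P^2 / (M - Dm)^2) := by
        field_simp
      rw [e1]
      have e2 : P^2 / (M - Dm)^2 < ε'^2 := by
        rw [div_lt_iff₀ (by positivity)]
        linarith
      calc S * (P^2 / (M - Dm)^2) < S * ε'^2 := by
            apply mul_lt_mul_of_pos_left e2 hSpos
        _ = ε'^2 * S := by ring
    linarith
  -- Hall matching
  have hall : ∃ f : (Fin n ⊕ Fin 1) → (Fin n ⊕ Fin 1), Function.Injective f ∧
      (∀ i : Fin n, |μ (f (inl i)) - d i| < ε') ∧ (∀ j : Fin 1, Dm + 1 < μ (f (inr j))) := by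
    set Tb : Finset (Fin n ⊕ Fin 1) := univ.filter (fun k => Dm + 1 < μ k) with hTb
    set t : (Fin n ⊕ Fin 1) → Finset (Fin n ⊕ Fin 1) :=
      fun x => Sum.elim (fun i => univ.filter (fun k => |μ k - d i| < ε')) (fun _ => Tb) x with hht
    suffices hHall : ∀ s : Finset (Fin n ⊕ Fin 1), s.card ≤ (s.biUnion t).card by
      obtain ⟨f, finj, hf⟩ := (Finset.all_card_le_biUnion_card_iff_exists_injective t).1 hHall
      refine ⟨f, finj, fun i => ?_, fun j => ?_⟩
      · exact (Finset.mem_filter.1 (hf (inl i))).2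
      · exact (Finset.mem_filter.1 (hf (inr j))).2
    intro s
    set val : (Fin n ⊕ Fin 1) → Option ℝ := Sum.elim (fun i => some (d i)) (fun _ => none) with hval
    set u : Option ℝ → Finset (Fin n ⊕ Fin 1) :=
      fun o => o.elim Tb (fun c => univ.filter (fun k => |μ k - c| < ε')) with hu
    have htu : ∀ x, t x = u (val x) := by intro x; cases x <;> rfl
    set fib : Option ℝ → Finset (Fin n ⊕ Fin 1) :=
      fun o => univ.filter (fun x => val x = o) with hfib
    have hfibmem : ∀ o x, x ∈ fib o ↔ val x = o := by
      intro o x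
      rw [hfib]
      simp
    have humem : ∀ (c : ℝ) k, k ∈ u (some c) ↔ |μ k - c| < ε' := by
      intro c k
      rw [hu]
      simp
    have hTbmem : ∀ k, k ∈ Tb ↔ Dm + 1 < μ k := by
      intro k
      rw [hTb]; simp
    have himval : ∀ o ∈ s.image val, ∀ c : ℝ, o = some c → ∃ i : Fin n, c = d i := by
      intro o ho c hoc
      subst hoc
      obtain ⟨x, -, hx⟩ := Finset.mem_image.1 ho
      cases x with
      | inl i => exact ⟨i, by simpa [hval] using hx.symm⟩
      | inr j => simp [hval] at hx
    have hfibdisj : ∀ o₁ ∈ s.image val, ∀ o₂ ∈ s.image val, o₁ ≠ o₂ →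
        Disjoint (fib o₁) (fib o₂) := by
      intro o₁ _ o₂ _ hne
      rw [Finset.disjoint_left]
      intro x hx1 hx2
      rw [hfibmem] at hx1 hx2
      exact hne (hx1 ▸ hx2 ▸ rfl)
    have hudisj : ∀ o₁ ∈ s.image val, ∀ o₂ ∈ s.image val, o₁ ≠ o₂ →
        Disjoint (u o₁) (u o₂) := by
      intro o₁ ho₁ o₂ ho₂ hne
      rw [Finset.disjoint_left]
      intro k hk1 hk2
      match o₁, o₂ with
      | none, none => exact hne rfl
      | some c₁, none =>
        obtain ⟨i₁, hc₁⟩ := himval _ ho₁ c₁ rfl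
        rw [humem] at hk1
        have hk2 : Dm + 1 < μ k := (hTbmem k).1 hk2
        have h1 : μ k < c₁ + ε' := by
          have := abs_lt.1 hk1; linarith [this.2]
        have h2 : c₁ ≤ Dm := hc₁ ▸ hdDm i₁
        linarith
      | none, some c₂ =>
        obtain ⟨i₂, hc₂⟩ := himval _ ho₂ c₂ rfl
        rw [humem] at hk2
        have hk1 : Dm + 1 < μ k := (hTbmem k).1 hk1
        have h1 : μ k < c₂ + ε' := by
          have := abs_lt.1 hk2; linarith [this.2]
        have h2 : c₂ ≤ Dm := hc₂ ▸ hdDm i₂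
        linarith
      | some c₁, some c₂ =>
        obtain ⟨i₁, hc₁⟩ := himval _ ho₁ c₁ rfl
        obtain ⟨i₂, hc₂⟩ := himval _ ho₂ c₂ rfl
        rw [humem] at hk1 hk2
        have hcc : c₁ ≠ c₂ := fun hcc => hne (by rw [hcc])
        have hdd : d i₁ ≠ d i₂ := fun hdd => hcc (by rw [hc₁, hc₂, hdd])
        have := hgap i₁ i₂ hdd
        have habs : |d i₁ - d i₂| < 2 * ε' := by
          rw [← hc₁, ← hc₂]
          have a1 := abs_lt.1 hk1
          have a2 := abs_lt.1 hk2
          rw [abs_lt]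
          constructor <;> linarith [a1.1, a1.2, a2.1, a2.2]
        linarith
    have hcard : ∀ o ∈ s.image val, (fib o).card ≤ (u o).card := by
      intro o ho
      match o with
      | none =>
        have h1 : fib none ⊆ {inr 0} := by
          intro x hx
          rw [hfibmem] at hx
          cases x with
          | inl i => simp [hval] at hx
          | inr j =>
            have : j = 0 := Subsingleton.elim _ _
            rw [this]; exact Finset.mem_singleton_self _
        have h2 : (fib none).card ≤ 1 := by
          calc (fib none).card ≤ ({inr 0} : Finset (Fin n ⊕ Fin 1)).card := Finset.card_le_card h1
            _ = 1 := Finset.card_singleton _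
        have h3 : 1 ≤ (u none).card := by
          obtain ⟨k, hk⟩ := hbig
          have : k ∈ u none := by
            rw [show u none = Tb from rfl, hTbmem]
            exact hk
          exact Finset.card_pos.2 ⟨k, this⟩
        omega
      | some c =>
        obtain ⟨i₀, hc₀⟩ := himval _ ho c rfl
        have hfib_eq : fib (some c)
            = (univ.filter (fun j : Fin n => d j = d i₀)).map ⟨inl, Sum.inl_injective⟩ := by
          ext x
          rw [hfibmem]
          cases x with
          | inl i =>
            simp only [hval, Sum.elim_inl, Finset.mem_map, Finset.mem_filter, Finset.mem_univ,
              true_and, Function.Embedding.coeFn_mk, hc₀]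
            constructor
            · rintro h
              exact ⟨i, Option.some_injective ℝ h, rfl⟩
            · rintro ⟨j, hj1, hj2⟩
              cases hj2
              exact congrArg some hj1
          | inr j =>
            simp only [hval, Sum.elim_inr, Finset.mem_map, Function.Embedding.coeFn_mk]
            constructor
            · intro h; exact absurd h (by simp)
            · rintro ⟨j', -, hj2⟩; cases hj2
        have hu_eq : u (some c) = univ.filter (fun k => |μ k - d i₀| < ε') := by
          rw [hc₀, hu]
          rfl
        rw [hfib_eq, hu_eq, Finset.card_map]
        exact F1 i₀
    calc s.card ≤ ((s.image val).biUnion fib).card := by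
          apply Finset.card_le_card
          intro x hx
          exact Finset.mem_biUnion.2 ⟨val x, Finset.mem_image_of_mem val hx,
            (hfibmem _ _).2 rfl⟩
      _ = ∑ o ∈ s.image val, (fib o).card := Finset.card_biUnion hfibdisj
      _ ≤ ∑ o ∈ s.image val, (u o).card := Finset.sum_le_sum hcard
      _ = ((s.image val).biUnion u).card := (Finset.card_biUnion hudisj).symm
      _ ≤ (s.biUnion t).card := by
          apply Finset.card_le_card
          intro k hk
          obtain ⟨o, ho, hko⟩ := Finset.mem_biUnion.1 hk
          obtain ⟨x, hxs, hxo⟩ := Finset.mem_image.1 ho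
          exact Finset.mem_biUnion.2 ⟨x, hxs, by rw [htu x, hxo]; exact hko⟩
  obtain ⟨f, finj, hf1, hf2⟩ := hall
  let σ : Equiv.Perm (Fin n ⊕ Fin 1) := Equiv.ofBijective f ((Finite.injective_iff_bijective).1 finj)
  refine ⟨σ, fun i => lt_of_lt_of_le (hf1 i) hε'ε, ?_⟩
  have hk := hf2 0
  have hb := hbigbound _ hk
  have heq : μ (f (inr 0)) / M - 1 = (μ (f (inr 0)) - M) / M := by
    field_simp
  show |μ (f (inr 0)) / M - 1| < ε
  rw [heq, abs_div, abs_of_pos hM0, div_lt_iff₀ hM0]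
  calc |μ (f (inr 0)) - M| ≤ P := hb
    _ < ε * M := by rw [mul_comm] at hMd; exact lt_of_lt_of_le hMd le_rfl

/- STATEMENT 19 (CNS III, Lemma 1.2): for the symmetric matrix A_M = [[D, b], [bᵀ, M]]
with D = diag(d₁,…,dₙ) fixed (dᵢ > 0) and b fixed, as M → ∞ the eigenvalues of A_M
can be enumerated (by a permutation σ) so that the first n of them converge to the dᵢ
(λ'ᵢ = dᵢ + o(1)) and the last one satisfies λ'_{n+1} = M(1 + o(1)). -/
theorem stmt_19 (n : ℕ) (d : Fin n → ℝ) (hd : ∀ i, 0 < d i) (b : Fin n → ℝ)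
    (h : ∀ M : ℝ,
      (Matrix.fromBlocks (Matrix.diagonal d)
        (Matrix.of fun i (_ : Fin 1) => b i)
        (Matrix.of fun (_ : Fin 1) j => b j)
        (Matrix.of fun (_ : Fin 1) (_ : Fin 1) => M)).IsHermitian) :
    ∀ ε > 0, ∃ M₀ : ℝ, ∀ M ≥ M₀,
      ∃ σ : Equiv.Perm (Fin n ⊕ Fin 1),
        (∀ i : Fin n, |(h M).eigenvalues (σ (Sum.inl i)) - d i| < ε) ∧
        |(h M).eigenvalues (σ (Sum.inr 0)) / M - 1| < ε := by
  classical
  intro ε hε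
  set P : ℝ := ∑ i, (b i)^2 with hP
  have hPnn : 0 ≤ P := Finset.sum_nonneg fun i _ => sq_nonneg _
  obtain ⟨δ, hδpos, hδ⟩ : ∃ δ > 0, ∀ i j, d i ≠ d j → δ ≤ |d i - d j| := by
    set F := (Finset.univ ×ˢ Finset.univ).filter (fun p : Fin n × Fin n => d p.1 ≠ d p.2) with hF
    rcases F.eq_empty_or_nonempty with hFe | hFne
    · refine ⟨1, one_pos, fun i j hij => ?_⟩
      have : (i, j) ∈ F := by
        rw [hF]
        exact Finset.mem_filter.2 ⟨by simp, hij⟩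
      rw [hFe] at this
      exact absurd this (Finset.notMem_empty _)
    · set G := F.image (fun p : Fin n × Fin n => |d p.1 - d p.2|) with hG
      have hGne : G.Nonempty := hFne.image _
      refine ⟨G.min' hGne, ?_, ?_⟩
      · obtain ⟨p, hp, hpe⟩ := Finset.mem_image.1 (G.min'_mem hGne)
        have hp2 : d p.1 ≠ d p.2 := (Finset.mem_filter.1 hp).2
        rw [← hpe]
        exact abs_pos.2 (sub_ne_zero.2 hp2)
      · intro i j hij
        apply Finset.min'_le
        exact Finset.mem_image.2 ⟨(i,j), Finset.mem_filter.2 ⟨by simp, hij⟩, rfl⟩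
  set ε' : ℝ := min (min ε 1) δ / 2 with hε'def
  have hmpos : 0 < min (min ε 1) δ := lt_min (lt_min hε one_pos) hδpos
  have hε'p : 0 < ε' := by rw [hε'def]; positivity
  have hε'ε : ε' ≤ ε := by
    have h1 : min (min ε 1) δ ≤ ε := le_trans (min_le_left _ _) (min_le_left _ _)
    rw [hε'def]; linarith
  have hε'1 : ε' ≤ 1 := by
    have h1 : min (min ε 1) δ ≤ 1 := le_trans (min_le_left _ _) (min_le_right _ _)
    rw [hε'def]; linarith
  have hgap : ∀ i j, d i ≠ d j → 2 * ε' ≤ |d i - d j| := by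
    intro i j hij
    have h1 : min (min ε 1) δ ≤ δ := min_le_right _ _
    have h2 := hδ i j hij
    rw [hε'def]; linarith
  refine ⟨(∑ i, d i) + 2 + P + P / ε' + (P + 1) / ε, fun M hM => ?_⟩
  have hDnn : (0:ℝ) ≤ ∑ i, d i := Finset.sum_nonneg fun i _ => (hd i).le
  have hd1 : 0 ≤ P / ε' := div_nonneg hPnn hε'p.le
  have hd2 : 0 ≤ (P + 1) / ε := div_nonneg (by linarith) hε.le
  have hMa : (∑ i, d i) + 2 + P ≤ M := by linarith
  have hMb : (∑ i, d i) + 2 + P / ε' ≤ M := by linarith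
  have hMd : P < M * ε := by
    have h1 : (P + 1) / ε ≤ M := by linarith
    have h2 : P + 1 ≤ M * ε := by
      rw [div_le_iff₀ hε] at h1
      linarith
    linarith
  have hmv1 : ∀ f : Fin n ⊕ Fin 1 → ℝ, ∀ i,
      ((Matrix.fromBlocks (Matrix.diagonal d)
        (Matrix.of fun i (_ : Fin 1) => b i)
        (Matrix.of fun (_ : Fin 1) j => b j)
        (Matrix.of fun (_ : Fin 1) (_ : Fin 1) => M)) *ᵥ f) (inl i)
        = d i * f (inl i) + b i * f (inr 0) := by
    intro f i
    simp [Matrix.mulVec, dotProduct, Fintype.sum_sum_type, Matrix.diagonal,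
      ite_mul, Finset.sum_ite_eq, Fin.sum_univ_one]
  have hmv2 : ∀ f : Fin n ⊕ Fin 1 → ℝ,
      ((Matrix.fromBlocks (Matrix.diagonal d)
        (Matrix.of fun i (_ : Fin 1) => b i)
        (Matrix.of fun (_ : Fin 1) j => b j)
        (Matrix.of fun (_ : Fin 1) (_ : Fin 1) => M)) *ᵥ f) (inr 0)
        = (∑ i, b i * f (inl i)) + M * f (inr 0) := by
    intro f
    simp [Matrix.mulVec, dotProduct, Fintype.sum_sum_type, Fin.sum_univ_one]
  exact stmt19_aux n d b M ε ε' hε hε'p hε'ε hε'1 hgap hd (h M) hmv1 hmv2 hMa hMb hMd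
end
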